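/- Equivalence of the induction-iteration stopping condition with invariant preservation: define I_j s := ∀ i ≤ j, P_i s. Then for every j, the implication (∀ s, I_j s → P_{j+1} s) holds if and only if I_j is preserved by the loop body under the guard, i.e., (∀ s, I_j s → B s → I_j (f s)). -/
import Mathlib

/-- The induction-iteration predicates: `P₀ s := (¬B s → Q s)` and
`P_{i+1} s := (B s → P_i (f s))`. -/
def iterPred {σ : Type*} (f : σ → σ) (B Q : σ → Prop) : ℕ → σ → Prop
  | 0 => fun s => ¬ B s → Q s
  | i + 1 => fun s => B s → iterPred f B Q i (f s)

/-- The approximations of the induction-iteration method: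
`I_j s := ∀ i ≤ j, P_i s`. -/
def iterApprox {σ : Type*} (f : σ → σ) (B Q : σ → Prop) (j : ℕ) (s : σ) : Prop :=
  ∀ i ≤ j, iterPred f B Q i s

/-- The induction-iteration stopping condition `∀ s, I_j s → P_{j+1} s` holds
iff `I_j` is preserved by the loop body under the guard. -/
theorem iterApprox_stopping_iff {σ : Type*} (f : σ → σ) (B Q : σ → Prop) :
    ∀ j : ℕ,
      (∀ s, iterApprox f B Q j s → iterPred f B Q (j + 1) s) ↔
        (∀ s, iterApprox f B Q j s → B s → iterApprox f B Q j (f s)) := by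
  intro j
  constructor
  · intro h s hI hB i hij
    rcases lt_or_eq_of_le hij with h' | h'
    · exact hI (i + 1) h' hB
    · subst h'; exact h s hI hB
  · intro h s hI hB
    exact h s hI hB j le_rfl
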